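/- Let d_u, d_v, α, β, γ > 0 with 0 < γ < α, and let f be a bistable nonlinearity that is moreover C¹ on [0,1] with f'(1) < 0. Let η₀ and b₀ be as in the uniqueness proposition for the limit problem, and for each L > b₀ let w₁ = w₁^L be the unique strictly increasing solution of −d_u w₁'' = f(w₁) on (0,L), w₁(0) = γ/α, w₁'(L) = 0, with 0 < w₁ < 1 and w₁(L) > 1 − η₀, and let w₂ = w₂^L be any C² solution of the linear problem d_u w₂'' + f'(w₁) w₂ = (2/L) f(w₁) on (0,L), w₂'(L) = 0, w₂(0) = (1/3) w₁'(0). Then lim_{L→∞} d_u (w₂^L)'(0) = −(1/3) f(γ/α); equivalently, the linear coefficient of the thin-limit expansion of the total predator population satisfies lim_{L→∞} (α/(β γ)) ( d_u (w₂^L)'(0) + f(γ/α) ) = (2/3) (α/(β γ)) f(γ/α). -/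

import Mathlib

open Set Filter

/-- A bistable nonlinearity: continuous on `[0,1]`, zeros exactly `0, θ, 1`,
negative on `(0,θ)`, positive on `(θ,1)`, and with positive total mass. -/
structure Bistable (f : ℝ → ℝ) (θ : ℝ) : Prop where
  cont : ContinuousOn f (Set.Icc 0 1)
  θ_mem : θ ∈ Set.Ioo (0:ℝ) 1
  f0 : f 0 = 0
  fθ : f θ = 0
  f1 : f 1 = 0
  neg : ∀ s ∈ Set.Ioo (0:ℝ) θ, f s < 0
  pos : ∀ s ∈ Set.Ioo θ (1:ℝ), 0 < f s
  int_pos : 0 < ∫ s in (0:ℝ)..1, f s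

/-- `u` (with derivative `u'`) is a C² solution of the limit problem (P_L):
`−d_u u'' = f(u)` on `(0,L)`, `u(0) = p`, `u'(L) = 0`. -/
def IsPL (du p : ℝ) (f : ℝ → ℝ) (L : ℝ) (u u' : ℝ → ℝ) : Prop :=
  (∀ x ∈ Set.Icc 0 L, HasDerivWithinAt u (u' x) (Set.Icc 0 L) x) ∧
  (∀ x ∈ Set.Icc 0 L, HasDerivWithinAt u' (-(f (u x)) / du) (Set.Icc 0 L) x) ∧
  u 0 = p ∧ u' L = 0

/-!
The Wronskian of `w₂` with the translation mode `w₁'`, corrected for the forcing, is constant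
on `[0, L]`; comparing its values at both ends gives
`(d_u w₂'(0) + f(γ/α)/3) w₁'(0) = w₂(L) f(w₁(L)) - (d_u/L) w₁'(0)²`.
Energy conservation for `w₁` shows that `w₁'(0)` stays between two positive constants, that
`w₁(L) → 1`, so `f(w₁(L)) → 0`, and that after a time `X` independent of `L` the front lies where
`f' ≤ f'(1)/2 < 0`. It remains to bound `w₂(L)` uniformly: Grönwall's inequality controls `w₂` on
`[0, X]` and the maximum principle controls it on `[X, L]`. The resulting bound involves
`w₂'(0)`, which the identity expresses through `w₂(L)` with the small factor `f(w₁(L))`, so it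
can be absorbed.
-/

open Topology

def HasDerivOn (u u' : ℝ → ℝ) (s : Set ℝ) : Prop :=
  ∀ x ∈ s, HasDerivWithinAt u (u' x) s x

namespace HasDerivOn

variable {u u' : ℝ → ℝ} {a b : ℝ}

theorem mono {s t : Set ℝ} (h : HasDerivOn u u' s) (hts : t ⊆ s) : HasDerivOn u u' t :=
  fun x hx => (h x (hts hx)).mono hts

theorem continuousOn {s : Set ℝ} (h : HasDerivOn u u' s) : ContinuousOn u s :=
  fun x hx => (h x hx).continuousWithinAt

theorem hasDerivWithinAt_Ioo (h : HasDerivOn u u' (Icc a b)) :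
    ∀ x ∈ interior (Icc a b), HasDerivWithinAt u (u' x) (interior (Icc a b)) x := by
  rw [interior_Icc]
  exact fun x hx => (h x (Ioo_subset_Icc_self hx)).mono Ioo_subset_Icc_self

theorem hasDerivWithinAt_Ici (h : HasDerivOn u u' (Icc a b)) {x : ℝ} (hx : x ∈ Ico a b) :
    HasDerivWithinAt u (u' x) (Ici x) x :=
  (h x (Ico_subset_Icc_self hx)).mono_of_mem_nhdsWithin
    (mem_of_superset (Icc_mem_nhdsGE hx.2) (Icc_subset_Icc_left hx.1))

theorem hasDerivAt (h : HasDerivOn u u' (Icc a b)) {x : ℝ} (hx : x ∈ Ioo a b) :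
    HasDerivAt u (u' x) x :=
  (h x (Ioo_subset_Icc_self hx)).hasDerivAt (Icc_mem_nhds hx.1 hx.2)

theorem monotoneOn (h : HasDerivOn u u' (Icc a b)) (h' : ∀ x ∈ Ioo a b, 0 ≤ u' x) :
    MonotoneOn u (Icc a b) :=
  monotoneOn_of_hasDerivWithinAt_nonneg (convex_Icc a b) h.continuousOn
    h.hasDerivWithinAt_Ioo (by rwa [interior_Icc])

theorem antitoneOn (h : HasDerivOn u u' (Icc a b)) (h' : ∀ x ∈ Ioo a b, u' x ≤ 0) :
    AntitoneOn u (Icc a b) :=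
  antitoneOn_of_hasDerivWithinAt_nonpos (convex_Icc a b) h.continuousOn
    h.hasDerivWithinAt_Ioo (by rwa [interior_Icc])

theorem strictMonoOn (h : HasDerivOn u u' (Icc a b)) (h' : ∀ x ∈ Ioo a b, 0 < u' x) :
    StrictMonoOn u (Icc a b) :=
  strictMonoOn_of_hasDerivWithinAt_pos (convex_Icc a b) h.continuousOn
    h.hasDerivWithinAt_Ioo (by rwa [interior_Icc])

theorem strictAntiOn (h : HasDerivOn u u' (Icc a b)) (h' : ∀ x ∈ Ioo a b, u' x < 0) :
    StrictAntiOn u (Icc a b) :=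
  strictAntiOn_of_hasDerivWithinAt_neg (convex_Icc a b) h.continuousOn
    h.hasDerivWithinAt_Ioo (by rwa [interior_Icc])

theorem eq_of_deriv_eq_zero (h : HasDerivOn u (fun _ => 0) (Icc a b)) (hab : a ≤ b) :
    u b = u a :=
  constant_of_has_deriv_right_zero h.continuousOn (fun _ hx => h.hasDerivWithinAt_Ici hx) b
    ⟨hab, le_rfl⟩

end HasDerivOn

section SecondOrder

variable {g g' g'' : ℝ → ℝ} {a b : ℝ}

/-- Above the level `R / κ` the function is strictly convex, so a maximum there would have to sit
at the left end. -/
theorem le_max_of_hasDerivOn_of_coeff_pos {q r : ℝ → ℝ} {du κ R : ℝ} (hab : a ≤ b) (hdu : 0 < du)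
    (hκ : 0 < κ) (hg : HasDerivOn g g' (Icc a b)) (hg' : HasDerivOn g' g'' (Icc a b))
    (heq : ∀ x ∈ Icc a b, du * g'' x = q x * g x + r x) (hq : ∀ x ∈ Icc a b, κ ≤ q x)
    (hr : ∀ x ∈ Icc a b, |r x| ≤ R) (hb : g' b = 0) :
    ∀ x ∈ Icc a b, g x ≤ max (g a) (R / κ) := by
  obtain ⟨x₀, hx₀, hmax⟩ := isCompact_Icc.exists_isMaxOn (nonempty_Icc.2 hab) hg.continuousOn
  suffices g x₀ ≤ max (g a) (R / κ) from fun x hx => (hmax hx).trans this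
  by_contra! hlt
  set B := max (g a) (R / κ)
  have hR : 0 ≤ R := (abs_nonneg _).trans (hr a ⟨le_rfl, hab⟩)
  have hconvex : ∀ x ∈ Icc a b, B < g x → 0 < g'' x := by
    intro x hx hgx
    have hRg : R < κ * g x := (div_lt_iff₀' hκ).1 ((le_max_right _ _).trans_lt hgx)
    have hqg : κ * g x ≤ q x * g x :=
      mul_le_mul_of_nonneg_right (hq x hx) ((div_nonneg hR hκ.le).trans
        ((le_max_right _ _).trans hgx.le))
    have := heq x hx
    have := (abs_le.1 (hr x hx)).1
    exact pos_of_mul_pos_right (by linarith) hdu.le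
  have hax₀ : a < x₀ := hx₀.1.lt_of_ne (by rintro rfl; exact hlt.not_ge (le_max_left _ _))
  have hcrit : g' x₀ = 0 := by
    rcases hx₀.2.lt_or_eq with h | rfl
    · exact (hmax.isLocalMax (Icc_mem_nhds hax₀ h)).hasDerivAt_eq_zero (hg.hasDerivAt ⟨hax₀, h⟩)
    · exact hb
  obtain ⟨δ, hδ, hnear⟩ := Metric.continuousWithinAt_iff.1 (hg.continuousOn x₀ hx₀) _
    (sub_pos.2 hlt)
  set c := max a (x₀ - δ / 2)
  have hc : c < x₀ := max_lt hax₀ (by linarith)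
  have hsub : Icc c x₀ ⊆ Icc a b := Icc_subset_Icc (le_max_left _ _) hx₀.2
  have habove : ∀ y ∈ Icc c x₀, B < g y := by
    intro y hy
    have hdist : dist y x₀ < δ := by
      rw [Real.dist_eq, abs_of_nonpos (by linarith [hy.2])]
      linarith [le_max_right a (x₀ - δ / 2), hy.1]
    have := (abs_lt.1 (hnear (hsub hy) hdist)).1
    linarith
  have hg'mono : StrictMonoOn g' (Icc c x₀) := (hg'.mono hsub).strictMonoOn fun y hy =>
    hconvex y (hsub (Ioo_subset_Icc_self hy)) (habove y (Ioo_subset_Icc_self hy))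
  have hganti : StrictAntiOn g (Icc c x₀) := (hg.mono hsub).strictAntiOn fun y hy =>
    hcrit ▸ hg'mono (Ioo_subset_Icc_self hy) ⟨hc.le, le_rfl⟩ hy.2
  exact (hganti ⟨le_rfl, hc.le⟩ ⟨hc.le, le_rfl⟩ hc).not_ge (hmax (hsub ⟨le_rfl, hc.le⟩))

theorem abs_le_max_of_hasDerivOn_of_coeff_pos {q r : ℝ → ℝ} {du κ R : ℝ} (hab : a ≤ b)
    (hdu : 0 < du) (hκ : 0 < κ) (hg : HasDerivOn g g' (Icc a b))
    (hg' : HasDerivOn g' g'' (Icc a b)) (heq : ∀ x ∈ Icc a b, du * g'' x = q x * g x + r x)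
    (hq : ∀ x ∈ Icc a b, κ ≤ q x) (hr : ∀ x ∈ Icc a b, |r x| ≤ R) (hb : g' b = 0) :
    ∀ x ∈ Icc a b, |g x| ≤ max |g a| (R / κ) := by
  intro x hx
  have hup := le_max_of_hasDerivOn_of_coeff_pos hab hdu hκ hg hg' heq hq hr hb x hx
  have hdown := le_max_of_hasDerivOn_of_coeff_pos (g := fun x => -g x) (g' := fun x => -g' x)
    (g'' := fun x => -g'' x) (r := fun x => -r x) hab hdu hκ (fun y hy => (hg y hy).neg)
    (fun y hy => (hg' y hy).neg) (fun y hy => by linear_combination -heq y hy) hq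
    (fun y hy => (abs_neg (r y)).trans_le (hr y hy)) (by simp [hb]) x hx
  refine abs_le.2 ⟨?_, ?_⟩
  · linarith [max_le_max (neg_le_abs (g a)) (le_refl (R / κ))]
  · exact hup.trans (max_le_max (le_abs_self _) le_rfl)

theorem max_abs_le_gronwallBound {K R : ℝ} (hK : 1 ≤ K) (hR : 0 ≤ R)
    (hg : HasDerivOn g g' (Icc a b)) (hg' : HasDerivOn g' g'' (Icc a b))
    (hbound : ∀ x ∈ Ico a b, |g'' x| ≤ K * max |g x| |g' x| + R) :
    ∀ x ∈ Icc a b, max |g x| |g' x| ≤ gronwallBound (max |g a| |g' a|) K R (x - a) := by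
  have hgronwall := norm_le_gronwallBound_of_norm_deriv_right_le (f := fun x => (g x, g' x))
    (f' := fun x => (g' x, g'' x)) (δ := max |g a| |g' a|) (K := K) (ε := R)
    (fun x hx => (hg.continuousOn x hx).prodMk (hg'.continuousOn x hx))
    (fun x hx => (hg.hasDerivWithinAt_Ici hx).prodMk (hg'.hasDerivWithinAt_Ici hx))
    (by simp) fun x hx => by
      simp only [Prod.norm_mk, Real.norm_eq_abs]
      refine max_le ?_ (hbound x hx)
      have hm : |g' x| ≤ max |g x| |g' x| := le_max_right _ _
      nlinarith [(abs_nonneg (g' x)).trans hm]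
  simpa only [Prod.norm_mk, Real.norm_eq_abs] using hgronwall

end SecondOrder

theorem gronwallBound_eq_mul_exp_add (δ K ε x : ℝ) :
    gronwallBound δ K ε x = δ * Real.exp (K * x) + gronwallBound 0 K ε x := by
  by_cases hK : K = 0
  · simp [gronwallBound_K0, hK]
  · simp only [gronwallBound_of_K_ne_0 hK]
    ring

theorem exists_forall_Ioc_lt_of_continuousWithinAt {g : ℝ → ℝ} {a b c : ℝ} (hab : a < b)
    (hg : ContinuousWithinAt g (Icc a b) b) (hc : g b < c) : ∃ l < b, ∀ s ∈ Ioc l b, g s < c := by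
  have hmem : {s | g s < c} ∈ 𝓝[≤] b :=
    nhdsWithin_le_of_mem (Icc_mem_nhdsLE hab) (hg (Iio_mem_nhds hc))
  exact mem_nhdsLE_iff_exists_Ioc_subset.1 hmem

noncomputable def potential (f : ℝ → ℝ) (s : ℝ) : ℝ := ∫ r in (0:ℝ)..s, f r

section Potential

variable {f : ℝ → ℝ} {s t : ℝ}

theorem potential_sub_potential (hf : ContinuousOn f (Icc 0 1)) (hs : s ∈ Icc (0:ℝ) 1)
    (ht : t ∈ Icc (0:ℝ) 1) : potential f t - potential f s = ∫ r in s..t, f r := by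
  have h0 : (0:ℝ) ∈ Icc (0:ℝ) 1 := ⟨le_rfl, zero_le_one⟩
  exact intervalIntegral.integral_interval_sub_left
    ((hf.mono (uIcc_subset_Icc h0 ht)).intervalIntegrable)
    ((hf.mono (uIcc_subset_Icc h0 hs)).intervalIntegrable)

theorem hasDerivAt_potential (hf : ContinuousOn f (Icc 0 1)) (hs : s ∈ Ioo (0:ℝ) 1) :
    HasDerivAt (potential f) (f s) s :=
  intervalIntegral.integral_hasDerivAt_right
    ((hf.mono (uIcc_subset_Icc ⟨le_rfl, zero_le_one⟩ (Ioo_subset_Icc_self hs))).intervalIntegrable)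
    ⟨Icc 0 1, Icc_mem_nhds hs.1 hs.2, hf.aestronglyMeasurable measurableSet_Icc⟩
    (hf.continuousAt (Icc_mem_nhds hs.1 hs.2))

theorem potential_sub_le {M : ℝ} (hf : ContinuousOn f (Icc 0 1))
    (hM : ∀ s ∈ Icc (0:ℝ) 1, |f s| ≤ M) (hs : 0 ≤ s) (hst : s ≤ t) (ht : t ≤ 1) :
    potential f t - potential f s ≤ M * (t - s) := by
  rw [potential_sub_potential hf ⟨hs, hst.trans ht⟩ ⟨hs.trans hst, ht⟩]
  have h := intervalIntegral.norm_integral_le_of_norm_le_const (a := s) (b := t) (C := M)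
    (f := f) fun x hx => by
      rw [uIoc_of_le hst] at hx
      exact hM x ⟨hs.trans hx.1.le, hx.2.trans ht⟩
  rw [abs_of_nonneg (sub_nonneg.2 hst)] at h
  exact (le_abs_self _).trans h

end Potential

namespace Bistable

variable {f : ℝ → ℝ} {θ θ' s t : ℝ}

theorem nonneg_of_mem_Icc (hf : Bistable f θ) (hs : s ∈ Icc θ 1) : 0 ≤ f s := by
  rcases hs.1.eq_or_lt with rfl | h1
  · exact hf.fθ.ge
  rcases hs.2.eq_or_lt with rfl | h2
  · exact hf.f1.ge
  exact (hf.pos s ⟨h1, h2⟩).le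

theorem nonpos_of_mem_Icc (hf : Bistable f θ) (hs : s ∈ Icc 0 θ) : f s ≤ 0 := by
  rcases hs.1.eq_or_lt with rfl | h1
  · exact hf.f0.le
  rcases hs.2.eq_or_lt with rfl | h2
  · exact hf.fθ.le
  exact (hf.neg s ⟨h1, h2⟩).le

theorem potential_le_potential_of_le (hf : Bistable f θ) (hs : θ ≤ s) (hst : s ≤ t) (ht : t ≤ 1) :
    potential f s ≤ potential f t := by
  have hs0 : 0 ≤ s := hf.θ_mem.1.le.trans hs
  rw [← sub_nonneg, potential_sub_potential hf.cont ⟨hs0, hst.trans ht⟩ ⟨hs0.trans hst, ht⟩]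
  exact intervalIntegral.integral_nonneg hst fun r hr =>
    hf.nonneg_of_mem_Icc ⟨hs.trans hr.1, hr.2.trans ht⟩

theorem potential_lt_potential_of_lt (hf : Bistable f θ) (hs : θ ≤ s) (hst : s < t) (ht : t ≤ 1) :
    potential f s < potential f t := by
  have hs0 : 0 ≤ s := hf.θ_mem.1.le.trans hs
  have hsI : s ∈ Icc (0:ℝ) 1 := ⟨hs0, hst.le.trans ht⟩
  have htI : t ∈ Icc (0:ℝ) 1 := ⟨hs0.trans hst.le, ht⟩
  rw [← sub_pos, potential_sub_potential hf.cont hsI htI]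
  exact intervalIntegral.intervalIntegral_pos_of_pos_on
    ((hf.cont.mono (uIcc_subset_Icc hsI htI)).intervalIntegrable)
    (fun r hr => hf.pos r ⟨hs.trans_lt hr.1, hr.2.trans_le ht⟩) hst

theorem exists_pos_le {a c : ℝ} (hf : Bistable f θ) (ha : θ < a) (hc : c < 1) : ∃ m, 0 < m ∧ ∀ s ∈ Icc a c, m ≤ f s := by
  rcases (Icc a c).eq_empty_or_nonempty with h | h
  · exact ⟨1, one_pos, by simp [h]⟩
  have hsub : Icc a c ⊆ Ioo θ 1 := Icc_subset_Ioo ha hc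
  obtain ⟨z, hz, hmin⟩ := isCompact_Icc.exists_isMinOn h
    (hf.cont.mono (hsub.trans (Ioo_subset_Icc_self.trans (Icc_subset_Icc_left hf.θ_mem.1.le))))
  exact ⟨f z, hf.pos z (hsub hz), fun s hs => hmin hs⟩

variable (hf : Bistable f θ) (hθ' : θ' ∈ Ioo θ 1) (hF : potential f θ' = 0)
include hf hθ' hF

theorem potential_nonpos (hs : s ∈ Icc 0 θ') : potential f s ≤ 0 := by
  rcases le_or_gt s θ with hsθ | hθs
  · have h : 0 ≤ ∫ r in (0:ℝ)..s, -f r := intervalIntegral.integral_nonneg hs.1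
      fun r hr => neg_nonneg.2 (hf.nonpos_of_mem_Icc ⟨hr.1, hr.2.trans hsθ⟩)
    rw [intervalIntegral.integral_neg] at h
    exact neg_nonneg.1 h
  · rw [← hF]
    exact hf.potential_le_potential_of_le hθs.le hs.2 hθ'.2.le

theorem potential_le_potential (hs : 0 ≤ s) (hst : s ≤ t) (ht : θ' ≤ t) (ht1 : t ≤ 1) :
    potential f s ≤ potential f t := by
  rcases le_or_gt s θ' with hsθ' | hθ's
  · calc potential f s ≤ 0 := potential_nonpos hf hθ' hF ⟨hs, hsθ'⟩
      _ = potential f θ' := hF.symm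
      _ ≤ potential f t := hf.potential_le_potential_of_le hθ'.1.le ht ht1
  · exact hf.potential_le_potential_of_le (hθ'.1.trans hθ's).le hst ht1

theorem potential_lt_potential (hs : 0 ≤ s) (hst : s < t) (ht : θ' < t) (ht1 : t ≤ 1) :
    potential f s < potential f t := by
  rcases le_or_gt s θ' with hsθ' | hθ's
  · calc potential f s ≤ 0 := potential_nonpos hf hθ' hF ⟨hs, hsθ'⟩
      _ = potential f θ' := hF.symm
      _ < potential f t := hf.potential_lt_potential_of_lt hθ'.1.le ht ht1
  · exact hf.potential_lt_potential_of_lt (hθ'.1.trans hθ's).le hst ht1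

end Bistable

namespace IsPL

variable {du p L : ℝ} {f : ℝ → ℝ} {w w' : ℝ → ℝ}

theorem hasDerivOn (h : IsPL du p f L w w') : HasDerivOn w w' (Icc 0 L) := h.1

theorem hasDerivOn_deriv (h : IsPL du p f L w w') :
    HasDerivOn w' (fun x => -f (w x) / du) (Icc 0 L) := h.2.1

theorem add_mul_sq_le (h : IsPL du p f L w w') (hdu : 0 < du) {m x : ℝ}
    (hx : x ∈ Icc 0 L) (hm : ∀ y ∈ Icc x L, m ≤ f (w y)) :
    w x + m / (2 * du) * (L - x) ^ 2 ≤ w L := by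
  have hsub : Icc x L ⊆ Icc 0 L := Icc_subset_Icc_left hx.1
  have hxL : x ∈ Icc x L := ⟨le_rfl, hx.2⟩
  have hLL : L ∈ Icc x L := ⟨hx.2, le_rfl⟩
  have hslope : HasDerivOn (fun y => w' y + m / du * (y - L))
      (fun y => -f (w y) / du + m / du) (Icc x L) := fun y hy =>
    ((h.hasDerivOn_deriv.mono hsub) y hy).add
      ((((hasDerivAt_id y).sub_const L).const_mul (m / du)).hasDerivWithinAt.congr_deriv
        (by simp))
  have hslope_nonneg : ∀ y ∈ Icc x L, 0 ≤ w' y + m / du * (y - L) := by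
    intro y hy
    have hanti := hslope.antitoneOn fun z hz => by
      rw [← add_div]
      exact div_nonpos_of_nonpos_of_nonneg (by linarith [hm z (Ioo_subset_Icc_self hz)]) hdu.le
    simpa [h.2.2.2] using hanti hy hLL hy.2
  have hrise : HasDerivOn (fun y => w y + m / (2 * du) * (y - L) ^ 2)
      (fun y => w' y + m / du * (y - L)) (Icc x L) := fun y hy => by
    have hq := (((hasDerivAt_id y).sub_const L).pow 2).const_mul (m / (2 * du))
    refine ((h.hasDerivOn.mono hsub) y hy).add hq.hasDerivWithinAt |>.congr_deriv ?_
    simp only [id]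
    field_simp
    ring
  have hmono := hrise.monotoneOn (fun y hy => hslope_nonneg y (Ioo_subset_Icc_self hy)) hxL hLL
    hx.2
  calc w x + m / (2 * du) * (L - x) ^ 2 = w x + m / (2 * du) * (x - L) ^ 2 := by ring
    _ ≤ w L + m / (2 * du) * (L - L) ^ 2 := hmono
    _ = w L := by ring

end IsPL

structure IsMonotonePL (du p : ℝ) (f : ℝ → ℝ) (L : ℝ) (w w' : ℝ → ℝ) : Prop where
  isPL : IsPL du p f L w w'
  mem : ∀ x ∈ Icc (0:ℝ) L, 0 < w x ∧ w x < 1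
  deriv_pos : ∀ x ∈ Ico (0:ℝ) L, 0 < w' x

namespace IsMonotonePL

variable {du p L : ℝ} {f : ℝ → ℝ} {w w' : ℝ → ℝ} (h : IsMonotonePL du p f L w w')
include h

theorem deriv_nonneg {x : ℝ} (hx : x ∈ Icc 0 L) : 0 ≤ w' x := by
  rcases hx.2.lt_or_eq with hxL | rfl
  · exact (h.deriv_pos x ⟨hx.1, hxL⟩).le
  · exact h.isPL.2.2.2.ge

theorem monotoneOn : MonotoneOn w (Icc 0 L) :=
  h.isPL.hasDerivOn.monotoneOn fun _ hx => h.deriv_nonneg (Ioo_subset_Icc_self hx)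

variable (hdu : 0 < du) (hf : ContinuousOn f (Icc 0 1))
include hdu hf

theorem energy {x : ℝ} (hx : x ∈ Icc 0 L) :
    du / 2 * w' x ^ 2 = potential f (w L) - potential f (w x) := by
  have hsub : Icc x L ⊆ Icc 0 L := Icc_subset_Icc_left hx.1
  have hE : HasDerivOn (fun y => du / 2 * w' y ^ 2 + potential f (w y)) (fun _ => 0)
      (Icc x L) := fun y hy => by
    have hwy := h.mem y (hsub hy)
    have hF := (hasDerivAt_potential hf hwy).comp_hasDerivWithinAt y
      ((h.isPL.hasDerivOn.mono hsub) y hy)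
    refine ((((h.isPL.hasDerivOn_deriv.mono hsub) y hy).pow 2).const_mul (du / 2)).add hF
      |>.congr_deriv ?_
    field_simp
    ring
  have := hE.eq_of_deriv_eq_zero hx.2
  simp only [h.isPL.2.2.2] at this
  linarith

theorem le_deriv_of_sq_le {c x : ℝ} (hc : 0 ≤ c) (hx : x ∈ Icc 0 L)
    (hgap : du / 2 * c ^ 2 ≤ potential f (w L) - potential f (w x)) : c ≤ w' x := by
  rw [← h.energy hdu hf hx] at hgap
  exact (pow_le_pow_iff_left₀ hc (h.deriv_nonneg hx) two_ne_zero).1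
    (le_of_mul_le_mul_left hgap (by positivity))

theorem deriv_le_sqrt {M : ℝ} (hM : ∀ s ∈ Icc (0:ℝ) 1, |f s| ≤ M) {x : ℝ} (hx : x ∈ Icc 0 L) :
    w' x ≤ √(2 * M / du) := by
  have hL : L ∈ Icc 0 L := ⟨hx.1.trans hx.2, le_rfl⟩
  have hwx := h.mem x hx
  have hwL := h.mem L hL
  have hmono := h.monotoneOn hx hL hx.2
  have hM0 : 0 ≤ M := (abs_nonneg _).trans (hM 0 ⟨le_rfl, zero_le_one⟩)
  have henergy : du / 2 * w' x ^ 2 ≤ M := by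
    rw [h.energy hdu hf hx]
    calc potential f (w L) - potential f (w x) ≤ M * (w L - w x) :=
          potential_sub_le hf hM hwx.1.le hmono hwL.2.le
      _ ≤ M * 1 := by gcongr; linarith
      _ = M := mul_one M
  refine Real.le_sqrt_of_sq_le ?_
  rw [le_div_iff₀ hdu]
  linarith

end IsMonotonePL

namespace Bistable

variable {f : ℝ → ℝ} {θ θ' du : ℝ}
variable (hf : Bistable f θ) (hθ' : θ' ∈ Ioo θ 1) (hF : potential f θ' = 0) (hdu : 0 < du)
include hf hθ' hF hdu

/-- The energy gap between `max a θ'` and `b ≤ w L` bounds `w'` from below while `w ≤ a`. -/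
theorem exists_le_deriv {a b : ℝ} (hab : a < b) (hb : θ' < b) (hb1 : b ≤ 1) :
    ∃ c, 0 < c ∧ ∀ {p L : ℝ} {w w' : ℝ → ℝ}, IsMonotonePL du p f L w w' → b ≤ w L →
      ∀ x ∈ Icc 0 L, w x ≤ a → c ≤ w' x := by
  set a' := max a θ'
  have ha'0 : 0 ≤ a' := (hf.θ_mem.1.trans hθ'.1).le.trans (le_max_right _ _)
  have ha'b : a' < b := max_lt hab hb
  have hgap : 0 < potential f b - potential f a' :=
    sub_pos.2 (hf.potential_lt_potential hθ' hF ha'0 ha'b hb hb1)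
  set c := √(2 * (potential f b - potential f a') / du)
  have hc2 : du / 2 * c ^ 2 = potential f b - potential f a' := by
    rw [Real.sq_sqrt (by positivity)]
    field_simp
  refine ⟨c, Real.sqrt_pos.2 (by positivity), fun {p L w w'} hw hbL x hx hwx => ?_⟩
  have hL : L ∈ Icc 0 L := ⟨hx.1.trans hx.2, le_rfl⟩
  refine hw.le_deriv_of_sq_le hdu hf.cont (Real.sqrt_nonneg _) hx (hc2.trans_le ?_)
  gcongr
  · exact hf.potential_le_potential hθ' hF (ha'0.trans ha'b.le) hbL (hb.le.trans hbL)
      (hw.mem L hL).2.le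
  · exact hf.potential_le_potential hθ' hF (hw.mem x hx).1.le (hwx.trans (le_max_left _ _))
      (le_max_right _ _) (ha'b.le.trans hb1)

/-- Since `w' ≥ c` while `w ≤ a` and `w < 1`, the solution passes `a` before time `1 / c`. -/
theorem exists_lt_of_le_end {a b : ℝ} (hab : a < b) (hb : θ' < b) (hb1 : b ≤ 1) :
    ∃ T, 0 < T ∧ ∀ {p L : ℝ} {w w' : ℝ → ℝ}, IsMonotonePL du p f L w w' → b ≤ w L →
      ∀ x ∈ Icc T L, a < w x := by
  obtain ⟨c, hc, hderiv⟩ := exists_le_deriv hf hθ' hF hdu hab hb hb1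
  refine ⟨1 / c, by positivity, fun {p L w w'} hw hbL x hx => ?_⟩
  by_contra! hwx
  have hx0 : 0 ≤ x := (by positivity : (0:ℝ) ≤ 1 / c).trans hx.1
  have hsub : Icc 0 x ⊆ Icc 0 L := Icc_subset_Icc_right hx.2
  have hgrowth : MonotoneOn (fun y => w y - c * y) (Icc 0 x) :=
    HasDerivOn.monotoneOn (u' := fun y => w' y - c) (fun y hy =>
      ((hw.isPL.hasDerivOn.mono hsub) y hy).sub
        (((hasDerivAt_id y).const_mul c).hasDerivWithinAt.congr_deriv (by simp)))
      fun y hy => sub_nonneg.2 <| hderiv hw hbL y (hsub (Ioo_subset_Icc_self hy))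
        ((hw.monotoneOn (hsub (Ioo_subset_Icc_self hy)) (hsub ⟨hx0, le_rfl⟩) hy.2.le).trans hwx)
  have h0x := hgrowth ⟨le_rfl, hx0⟩ ⟨hx0, le_rfl⟩ hx0
  have hcx : 1 ≤ c * x := by
    calc (1:ℝ) = c * (1 / c) := by field_simp
      _ ≤ c * x := by gcongr; exact hx.1
  have hw0 := (hw.mem 0 (hsub ⟨le_rfl, hx0⟩)).1
  have hwx1 := (hw.mem x (hsub ⟨hx0, le_rfl⟩)).2
  simp only [mul_zero, sub_zero] at h0x
  linarith

/-- Past the entry time, `f(w)` is bounded below, and the resulting quadratic rise towards the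
Neumann end cannot fit below `1` on a long interval. -/
theorem exists_lt_end {b s : ℝ} (hb : θ' < b) (hb1 : b ≤ 1) (hs : s < 1) :
    ∃ L₀, ∀ {p L : ℝ} {w w' : ℝ → ℝ}, IsMonotonePL du p f L w w' → b ≤ w L → L₀ ≤ L →
      s < w L := by
  obtain ⟨T, hT, hentry⟩ := exists_lt_of_le_end hf hθ' hF hdu hb hb hb1
  obtain ⟨m, hm, hfm⟩ := hf.exists_pos_le hθ'.1 hs
  refine ⟨T + √(2 * du / m), fun {p L w w'} hw hbL hL => ?_⟩
  by_contra! hwL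
  have hTL : T ≤ L := by linarith [Real.sqrt_nonneg (2 * du / m)]
  have hTmem : T ∈ Icc 0 L := ⟨hT.le, hTL⟩
  have hLmem : L ∈ Icc 0 L := ⟨hT.le.trans hTL, le_rfl⟩
  have hrise := hw.isPL.add_mul_sq_le hdu hTmem (m := m) fun y hy => hfm (w y)
    ⟨(hentry hw hbL y hy).le, (hw.monotoneOn (Icc_subset_Icc_left hT.le hy) hLmem hy.2).trans hwL⟩
  have hsq : 2 * du / m ≤ (L - T) ^ 2 := by
    calc 2 * du / m = √(2 * du / m) ^ 2 := (Real.sq_sqrt (by positivity)).symm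
      _ ≤ (L - T) ^ 2 := by gcongr; linarith
  have hone : 1 ≤ m / (2 * du) * (L - T) ^ 2 := by
    calc (1:ℝ) = m / (2 * du) * (2 * du / m) := by field_simp
      _ ≤ m / (2 * du) * (L - T) ^ 2 := by gcongr
  linarith [(hw.mem T hTmem).1, (hw.mem L hLmem).2]

theorem tendsto_end {p b : ℝ} {W W' : ℝ → ℝ → ℝ} (hb : θ' < b) (hb1 : b ≤ 1)
    (hW : ∀ᶠ L in atTop, IsMonotonePL du p f L (W L) (W' L) ∧ b ≤ W L L) :
    Tendsto (fun L => W L L) atTop (𝓝 1) := by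
  refine tendsto_order.2 ⟨fun s hs => ?_, fun s hs => ?_⟩
  · obtain ⟨L₀, hL₀⟩ := exists_lt_end hf hθ' hF hdu hb hb1 hs
    filter_upwards [hW, eventually_ge_atTop L₀] with L hWL hL
    exact hL₀ hWL.1 hWL.2 hL
  · filter_upwards [hW, eventually_ge_atTop 0] with L hWL hL
    exact (hWL.1.mem L ⟨hL, le_rfl⟩).2.trans hs

theorem tendsto_apply_end {p b : ℝ} {W W' : ℝ → ℝ → ℝ} (hb : θ' < b) (hb1 : b ≤ 1)
    (hW : ∀ᶠ L in atTop, IsMonotonePL du p f L (W L) (W' L) ∧ b ≤ W L L) :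
    Tendsto (fun L => f (W L L)) atTop (𝓝 0) := by
  refine hf.f1 ▸ (hf.cont 1 ⟨zero_le_one, le_rfl⟩).tendsto.comp
    (tendsto_nhdsWithin_iff.2 ⟨tendsto_end hf hθ' hF hdu hb hb1 hW, ?_⟩)
  filter_upwards [hW, eventually_ge_atTop 0] with L hL hL0
  exact ⟨(hL.1.mem L ⟨hL0, le_rfl⟩).1.le, (hL.1.mem L ⟨hL0, le_rfl⟩).2.le⟩

theorem eventually_deriv_bounds {f' : ℝ → ℝ} {p M b : ℝ} {W W' : ℝ → ℝ → ℝ}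
    (hf'c : ContinuousWithinAt f' (Icc 0 1) 1) (hf'1 : f' 1 < 0) (hp : p ∈ Ioo 0 1)
    (hM : ∀ s ∈ Icc (0:ℝ) 1, |f s| ≤ M) (hb : θ' < b) (hb1 : b ≤ 1)
    (hW : ∀ᶠ L in atTop, IsMonotonePL du p f L (W L) (W' L) ∧ b ≤ W L L) :
    ∃ X c₀, 0 ≤ X ∧ 0 < c₀ ∧ ∀ᶠ L in atTop,
      W' L 0 ∈ Icc c₀ √(2 * M / du) ∧ ∀ y ∈ Icc X L, f' (W L y) ≤ f' 1 / 2 := by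
  obtain ⟨l, hl1, hl⟩ := exists_forall_Ioc_lt_of_continuousWithinAt one_pos hf'c
    (by linarith : f' 1 < f' 1 / 2)
  set a := max l (max θ' p)
  have ha1 : a < 1 := max_lt hl1 (max_lt hθ'.2 hp.2)
  obtain ⟨b', hab', hb'1⟩ := exists_between ha1
  have hθ'b' : θ' < b' := ((le_max_left _ _).trans (le_max_right _ _)).trans_lt hab'
  have hpb' : p < b' := ((le_max_right _ _).trans (le_max_right _ _)).trans_lt hab'
  obtain ⟨L₀, hL₀⟩ := exists_lt_end hf hθ' hF hdu hb hb1 hb'1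
  obtain ⟨X, hX, hentry⟩ := exists_lt_of_le_end hf hθ' hF hdu hab' hθ'b' hb'1.le
  obtain ⟨c₀, hc₀, hderiv⟩ := exists_le_deriv hf hθ' hF hdu hpb' hθ'b' hb'1.le
  refine ⟨X, c₀, hX.le, hc₀, ?_⟩
  filter_upwards [hW, eventually_ge_atTop (max L₀ 0)] with L ⟨hw, hbL⟩ hL
  have hb'L : b' ≤ W L L := (hL₀ hw hbL (le_of_max_le_left hL)).le
  have h0 : (0:ℝ) ∈ Icc 0 L := ⟨le_rfl, le_of_max_le_right hL⟩
  refine ⟨⟨hderiv hw hb'L 0 h0 hw.isPL.2.2.1.le, hw.deriv_le_sqrt hdu hf.cont hM h0⟩,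
    fun y hy => (hl _ ⟨?_, ?_⟩).le⟩
  · exact (le_max_left _ _).trans_lt (hentry hw hb'L y hy)
  · exact (hw.mem y (Icc_subset_Icc_left hX.le hy)).2.le

end Bistable

section Linearized

variable {du p L M K X κ c₀ C₁ : ℝ} {f f' w w' u u' u'' : ℝ → ℝ}

/-- Conservation of the Wronskian of `u` with the translation mode `w'`, corrected for the
forcing `lam * f(w)`. -/
theorem IsPL.wronskian_eq {lam : ℝ} (hw : IsPL du p f L w w') (hdu : 0 < du) (hL : 0 ≤ L)
    (hmem : ∀ x ∈ Icc (0:ℝ) L, 0 < w x ∧ w x < 1)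
    (hf' : ∀ s ∈ Icc (0:ℝ) 1, HasDerivAt f (f' s) s)
    (hu : HasDerivOn u u' (Icc 0 L)) (hu' : HasDerivOn u' u'' (Icc 0 L))
    (heq : ∀ x ∈ Icc 0 L, du * u'' x + f' (w x) * u x = lam * f (w x)) :
    du * u' 0 * w' 0 + u 0 * f p + lam * du / 2 * w' 0 ^ 2 = u L * f (w L) := by
  have hΦ : HasDerivOn (fun x => du * u' x * w' x + u x * f (w x) + lam * du / 2 * w' x ^ 2)
      (fun _ => 0) (Icc 0 L) := fun x hx => by
    have hfw := (hf' (w x) (Ioo_subset_Icc_self (hmem x hx))).comp_hasDerivWithinAt x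
      (hw.hasDerivOn x hx)
    refine ((((hu' x hx).const_mul du).mul (hw.hasDerivOn_deriv x hx)).add
      ((hu x hx).mul hfw)).add (((hw.hasDerivOn_deriv x hx).pow 2).const_mul (lam * du / 2))
      |>.congr_deriv ?_
    simp only [Function.comp_apply]
    field_simp
    linear_combination (2 * w' x) * heq x hx
  have := hΦ.eq_of_deriv_eq_zero hL
  simp only [hw.2.2.1, hw.2.2.2] at this
  linarith

/-- Grönwall on `[0, X]` followed by the maximum principle on `[X, L]`, where `f'(w) ≤ -κ`. -/
theorem abs_end_le (hdu : 0 < du) (hL : 1 ≤ L) (hκ : 0 < κ)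
    (hfM : ∀ s ∈ Icc (0:ℝ) 1, |f s| ≤ M) (hf'K : ∀ s ∈ Icc (0:ℝ) 1, |f' s| ≤ K)
    (hw : IsMonotonePL du p f L w w') (hX : X ∈ Icc 0 L) (hκX : ∀ y ∈ Icc X L, f' (w y) ≤ -κ)
    (hu : HasDerivOn u u' (Icc 0 L)) (hu' : HasDerivOn u' u'' (Icc 0 L))
    (heq : ∀ x ∈ Icc 0 L, du * u'' x + f' (w x) * u x = 2 / L * f (w x)) (hu'L : u' L = 0) :
    |u L| ≤ max |u 0| |u' 0| * Real.exp (max 1 (K / du) * X)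
      + gronwallBound 0 (max 1 (K / du)) (2 * M / du) X + 2 * M / κ := by
  have hM : 0 ≤ M := (abs_nonneg _).trans (hfM 0 ⟨le_rfl, zero_le_one⟩)
  have hmem : ∀ x ∈ Icc 0 L, w x ∈ Icc (0:ℝ) 1 := fun x hx =>
    ⟨(hw.mem x hx).1.le, (hw.mem x hx).2.le⟩
  have hforcing : ∀ x ∈ Icc 0 L, |2 / L * f (w x)| ≤ 2 * M := fun x hx => by
    rw [abs_mul, abs_of_pos (by positivity)]
    have h2L : 2 / L ≤ 2 := div_le_self zero_le_two hL
    nlinarith [hfM (w x) (hmem x hx), abs_nonneg (f (w x))]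
  have hsub0 : Icc 0 X ⊆ Icc 0 L := Icc_subset_Icc_right hX.2
  have hu''bound : ∀ x ∈ Ico 0 X, |u'' x| ≤ max 1 (K / du) * max |u x| |u' x| + 2 * M / du := by
    intro x hx
    have hx' := hsub0 (Ico_subset_Icc_self hx)
    have hdu2 : |du * u'' x| ≤ K * |u x| + 2 * M := by
      rw [show du * u'' x = 2 / L * f (w x) - f' (w x) * u x by linarith [heq x hx']]
      refine (abs_sub _ _).trans ?_
      rw [abs_mul (f' (w x))]
      nlinarith [hforcing x hx', hf'K (w x) (hmem x hx'), abs_nonneg (u x)]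
    rw [abs_mul, abs_of_pos hdu, ← le_div_iff₀' hdu] at hdu2
    calc |u'' x| ≤ (K * |u x| + 2 * M) / du := hdu2
      _ = K / du * |u x| + 2 * M / du := by ring
      _ ≤ max 1 (K / du) * max |u x| |u' x| + 2 * M / du := by
        gcongr
        exacts [le_max_right _ _, le_max_left _ _]
  have hgronwall := max_abs_le_gronwallBound (le_max_left 1 (K / du)) (by positivity)
    (hu.mono hsub0) (hu'.mono hsub0) hu''bound X ⟨hX.1, le_rfl⟩
  have hmax := abs_le_max_of_hasDerivOn_of_coeff_pos (q := fun y => -f' (w y))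
    (r := fun y => 2 / L * f (w y)) hX.2 hdu hκ
    (hu.mono (Icc_subset_Icc_left hX.1)) (hu'.mono (Icc_subset_Icc_left hX.1))
    (fun y hy => by linarith [heq y (Icc_subset_Icc_left hX.1 hy)])
    (fun y hy => by linarith [hκX y hy])
    (fun y hy => hforcing y (Icc_subset_Icc_left hX.1 hy)) hu'L L ⟨hX.2, le_rfl⟩
  rw [sub_zero, gronwallBound_eq_mul_exp_add] at hgronwall
  have hX' : |u X| ≤ max |u X| |u' X| := le_max_left _ _
  have hκ' : 0 ≤ 2 * M / κ := by positivity
  calc |u L| ≤ max |u X| (2 * M / κ) := hmax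
    _ ≤ |u X| + 2 * M / κ := max_le_add_of_nonneg (abs_nonneg _) hκ'
    _ ≤ _ := by linarith


theorem max_abs_le_of_slope_error (hdu : 0 < du) (hw'0 : 0 ≤ w' 0) (hC₁ : w' 0 ≤ C₁)
    (hfp : |f p| ≤ M) (hu0 : u 0 = w' 0 / 3) :
    max |u 0| |u' 0| ≤ C₁ / 3 + (|du * u' 0 + f p / 3| + M / 3) / du := by
  have hM : 0 ≤ M := (abs_nonneg _).trans hfp
  have hu0' : |u 0| ≤ C₁ / 3 := by
    rw [hu0, abs_of_nonneg (div_nonneg hw'0 zero_le_three)]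
    linarith
  have hu'0 : |u' 0| ≤ (|du * u' 0 + f p / 3| + M / 3) / du := by
    rw [le_div_iff₀ hdu, ← abs_of_pos hdu, ← abs_mul, abs_of_pos hdu]
    calc |u' 0 * du| = |(du * u' 0 + f p / 3) - f p / 3| := by ring_nf
      _ ≤ |du * u' 0 + f p / 3| + |f p / 3| := abs_sub _ _
      _ ≤ |du * u' 0 + f p / 3| + M / 3 := by
        rw [abs_div, abs_of_pos (by norm_num : (0:ℝ) < 3)]
        linarith
  exact max_le (hu0'.trans (le_add_of_nonneg_right (by positivity)))
    (hu'0.trans (le_add_of_nonneg_left (div_nonneg (hw'0.trans hC₁) zero_le_three)))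

theorem abs_slope_error_le (hdu : 0 < du) (hL : 1 ≤ L) (hκ : 0 < κ) (hc₀ : 0 < c₀)
    (hfM : ∀ s ∈ Icc (0:ℝ) 1, |f s| ≤ M) (hf'K : ∀ s ∈ Icc (0:ℝ) 1, |f' s| ≤ K)
    (hf' : ∀ s ∈ Icc (0:ℝ) 1, HasDerivAt f (f' s) s)
    (hw : IsMonotonePL du p f L w w') (hw'0 : w' 0 ∈ Icc c₀ C₁)
    (hX : X ∈ Icc 0 L) (hκX : ∀ y ∈ Icc X L, f' (w y) ≤ -κ)
    (hu : HasDerivOn u u' (Icc 0 L)) (hu' : HasDerivOn u' u'' (Icc 0 L))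
    (heq : ∀ x ∈ Icc 0 L, du * u'' x + f' (w x) * u x = 2 / L * f (w x)) (hu'L : u' L = 0)
    (hu0 : u 0 = w' 0 / 3)
    (hsmall : Real.exp (max 1 (K / du) * X) / (du * c₀) * |f (w L)| ≤ 1 / 2) :
    |du * u' 0 + f p / 3| ≤
      (2 * ((C₁ / 3 + (du * C₁ ^ 2 / c₀ + M / 3) / du) * Real.exp (max 1 (K / du) * X)
        + gronwallBound 0 (max 1 (K / du)) (2 * M / du) X + 2 * M / κ) * |f (w L)|
        + du * C₁ ^ 2 / L) / c₀ := by
  set e := du * u' 0 + f p / 3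
  set ε := f (w L)
  set E := Real.exp (max 1 (K / du) * X)
  set G := gronwallBound 0 (max 1 (K / du)) (2 * M / du) X
  have hL0 : 0 ≤ L := zero_le_one.trans hL
  have hp : p ∈ Icc (0:ℝ) 1 := hw.isPL.2.2.1 ▸ ⟨(hw.mem 0 ⟨le_rfl, hL0⟩).1.le,
    (hw.mem 0 ⟨le_rfl, hL0⟩).2.le⟩
  have hE : 0 ≤ E := (Real.exp_pos _).le
  have hid : e * w' 0 = u L * ε - du / L * w' 0 ^ 2 := by
    have := hw.isPL.wronskian_eq hdu hL0 hw.mem hf' hu hu' heq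
    rw [hu0] at this
    linear_combination this
  have hsq : du / L * w' 0 ^ 2 ≤ du * C₁ ^ 2 / L := by
    calc du / L * w' 0 ^ 2 ≤ du / L * C₁ ^ 2 := by
          gcongr
          exacts [hc₀.le.trans hw'0.1, hw'0.2]
      _ = du * C₁ ^ 2 / L := by ring
  have herror : |e| * c₀ ≤ |u L| * |ε| + du * C₁ ^ 2 / L := by
    calc |e| * c₀ ≤ |e| * w' 0 := by gcongr; exact hw'0.1
      _ = |e * w' 0| := by rw [abs_mul, abs_of_pos (hc₀.trans_le hw'0.1)]
      _ ≤ |u L| * |ε| + du * C₁ ^ 2 / L := by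
        rw [hid, ← abs_mul]
        refine (abs_sub _ _).trans (add_le_add le_rfl ?_)
        rwa [abs_of_nonneg (by positivity)]
  have hinit := max_abs_le_of_slope_error (u' := u') hdu (hc₀.le.trans hw'0.1) hw'0.2
    (hfM p hp) hu0
  have hend := abs_end_le hdu hL hκ hfM hf'K hw hX hκX hu hu' heq hu'L
  have he : |e| ≤ (|u L| * |ε| + du * C₁ ^ 2) / c₀ := by
    rw [le_div_iff₀ hc₀]
    have : du * C₁ ^ 2 / L ≤ du * C₁ ^ 2 := div_le_self (by positivity) hL
    linarith
  have habsorb : |u L| ≤ 2 * ((C₁ / 3 + (du * C₁ ^ 2 / c₀ + M / 3) / du) * E + G + 2 * M / κ) := by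
    have hsplit : (C₁ / 3 + ((|u L| * |ε| + du * C₁ ^ 2) / c₀ + M / 3) / du) * E
        = (C₁ / 3 + (du * C₁ ^ 2 / c₀ + M / 3) / du) * E + E / (du * c₀) * |ε| * |u L| := by
      field_simp
      ring
    have hsmall' : E / (du * c₀) * |ε| * |u L| ≤ 1 / 2 * |u L| :=
      mul_le_mul_of_nonneg_right hsmall (abs_nonneg _)
    have : max |u 0| |u' 0| ≤ C₁ / 3 + ((|u L| * |ε| + du * C₁ ^ 2) / c₀ + M / 3) / du :=
      hinit.trans (by gcongr)
    nlinarith [mul_le_mul_of_nonneg_right this hE]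
  rw [le_div_iff₀ hc₀]
  nlinarith [mul_le_mul_of_nonneg_right habsorb (abs_nonneg ε)]

theorem tendsto_slope_error {W W' U U' U'' : ℝ → ℝ → ℝ} (hdu : 0 < du) (hκ : 0 < κ)
    (hc₀ : 0 < c₀) (hX : 0 ≤ X)
    (hfM : ∀ s ∈ Icc (0:ℝ) 1, |f s| ≤ M) (hf'K : ∀ s ∈ Icc (0:ℝ) 1, |f' s| ≤ K)
    (hf' : ∀ s ∈ Icc (0:ℝ) 1, HasDerivAt f (f' s) s)
    (hW : ∀ᶠ L in atTop, IsMonotonePL du p f L (W L) (W' L) ∧ W' L 0 ∈ Icc c₀ C₁ ∧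
      ∀ y ∈ Icc X L, f' (W L y) ≤ -κ)
    (hU : ∀ᶠ L in atTop, HasDerivOn (U L) (U' L) (Icc 0 L) ∧
      HasDerivOn (U' L) (U'' L) (Icc 0 L) ∧
      (∀ x ∈ Icc 0 L, du * U'' L x + f' (W L x) * U L x = 2 / L * f (W L x)) ∧
      U' L L = 0 ∧ U L 0 = W' L 0 / 3)
    (hend : Tendsto (fun L => f (W L L)) atTop (𝓝 0)) :
    Tendsto (fun L => du * U' L 0 + f p / 3) atTop (𝓝 0) := by
  set E := Real.exp (max 1 (K / du) * X)
  set A := (C₁ / 3 + (du * C₁ ^ 2 / c₀ + M / 3) / du) * E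
    + gronwallBound 0 (max 1 (K / du)) (2 * M / du) X + 2 * M / κ
  have hsmall : ∀ᶠ L in atTop, E / (du * c₀) * |f (W L L)| ≤ 1 / 2 := by
    have := (hend.abs.const_mul (E / (du * c₀))).eventually (Iic_mem_nhds (a := 1 / 2) (by simp))
    simpa using this
  have hbound : Tendsto (fun L => (2 * A * |f (W L L)| + du * C₁ ^ 2 / L) / c₀) atTop (𝓝 0) := by
    simpa using (((hend.abs.const_mul (2 * A)).add
      (tendsto_const_nhds.div_atTop tendsto_id)).div_const c₀)
  refine squeeze_zero_norm' ?_ hbound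
  filter_upwards [hW, hU, hsmall, eventually_ge_atTop (max 1 X)]
    with L ⟨hw, hw'0, hκX⟩ ⟨hu, hu', heq, hu'L, hu0⟩ hs hL
  exact abs_slope_error_le hdu (le_of_max_le_left hL) hκ hc₀ hfM hf'K hf' hw hw'0
    ⟨hX, le_of_max_le_right hL⟩ hκX hu hu' heq hu'L hu0 hs

end Linearized

theorem thin_limit_slope_general
    (du α β γ : ℝ) (hdu : 0 < du) (hα : 0 < α)
    (hγ : 0 < γ) (hγα : γ < α)
    (f f' : ℝ → ℝ) (θ θ' : ℝ) (hf : Bistable f θ)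
    (hf' : ∀ s ∈ Set.Icc (0:ℝ) 1, HasDerivAt f (f' s) s)
    (hf'c : ContinuousOn f' (Set.Icc 0 1)) (hf'1 : f' 1 < 0)
    (hθ'mem : θ' ∈ Set.Ioo θ 1) (hθ'F : (∫ r in (0:ℝ)..θ', f r) = 0)
    -- `η₀`, `b₀` as in the uniqueness proposition (Proposition 4.2):
    (η₀ b₀ : ℝ) (hη₀ : η₀ ∈ Set.Ioo (0:ℝ) (1 - θ'))
    (W1 W1' W2 W2' W2'' : ℝ → ℝ → ℝ)
    -- `W1 L` is the unique strictly increasing solution of the limit problem: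
    (hW1 : ∀ L, b₀ < L →
      IsPL du (γ / α) f L (W1 L) (W1' L) ∧
      (∀ x ∈ Set.Icc (0:ℝ) L, 0 < W1 L x ∧ W1 L x < 1) ∧
      1 - η₀ < W1 L L ∧
      (∀ x ∈ Set.Ico (0:ℝ) L, 0 < W1' L x))
    -- `W2 L` is a C² solution of the linear problem:
    (hW2 : ∀ L, b₀ < L →
      (∀ x ∈ Set.Icc (0:ℝ) L, HasDerivWithinAt (W2 L) (W2' L x) (Set.Icc 0 L) x) ∧
      (∀ x ∈ Set.Icc (0:ℝ) L, HasDerivWithinAt (W2' L) (W2'' L x) (Set.Icc 0 L) x) ∧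
      ContinuousOn (W2'' L) (Set.Icc 0 L) ∧
      (∀ x ∈ Set.Icc (0:ℝ) L,
        du * W2'' L x + f' (W1 L x) * W2 L x = 2 / L * f (W1 L x)) ∧
      W2' L L = 0 ∧ W2 L 0 = W1' L 0 / 3) :
    Filter.Tendsto (fun L => du * W2' L 0) Filter.atTop
      (nhds (-(1/3) * f (γ / α))) ∧
    Filter.Tendsto (fun L => α / (β * γ) * (du * W2' L 0 + f (γ / α)))
      Filter.atTop (nhds (2/3 * (α / (β * γ)) * f (γ / α))) := by
  obtain ⟨M, hM⟩ := isCompact_Icc.exists_bound_of_continuousOn hf.cont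
  obtain ⟨K, hK⟩ := isCompact_Icc.exists_bound_of_continuousOn hf'c
  have hfront : ∀ᶠ L in atTop, IsMonotonePL du (γ / α) f L (W1 L) (W1' L) ∧ 1 - η₀ ≤ W1 L L := by
    filter_upwards [eventually_gt_atTop b₀] with L hL
    obtain ⟨hPL, hmem, hηL, hderiv⟩ := hW1 L hL
    exact ⟨⟨hPL, hmem, hderiv⟩, hηL.le⟩
  have hb : θ' < 1 - η₀ := by linarith [hη₀.2]
  have hb1 : 1 - η₀ ≤ 1 := by linarith [hη₀.1]
  obtain ⟨X, c₀, hX, hc₀, hbounds⟩ := hf.eventually_deriv_bounds hθ'mem hθ'F hdu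
    (hf'c 1 ⟨zero_le_one, le_rfl⟩) hf'1 ⟨div_pos hγ hα, (div_lt_one hα).2 hγα⟩ hM hb hb1 hfront
  have herr := tendsto_slope_error (U := W2) (U'' := W2'') hdu (by linarith : 0 < -(f' 1 / 2))
    hc₀ hX hM hK hf'
    (by filter_upwards [hfront, hbounds] with L hL hLb
        exact ⟨hL.1, hLb.1, fun y hy => by linarith [hLb.2 y hy]⟩)
    (by filter_upwards [eventually_gt_atTop b₀] with L hL
        obtain ⟨hu, hu', -, heq, hu'L, hu0⟩ := hW2 L hL
        exact ⟨hu, hu', heq, hu'L, hu0⟩) (hf.tendsto_apply_end hθ'mem hθ'F hdu hb hb1 hfront)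
  constructor
  · convert herr.sub_const (f (γ / α) / 3) using 2 <;> ring
  · convert (herr.add_const (2 / 3 * f (γ / α))).const_mul (α / (β * γ)) using 2 <;> ring

/-- **Theorem 4.4 (thin-limit slope).**
For each `L > b₀` let `w₁ = W1 L` be the unique strictly increasing solution of
the limit problem, and `w₂ = W2 L` any C² solution of the linear problem
`d_u w₂'' + f'(w₁) w₂ = (2/L) f(w₁)`, `w₂'(L) = 0`, `w₂(0) = (1/3) w₁'(0)`.
Then `d_u w₂'(0) → −(1/3) f(γ/α)` as `L → ∞`; equivalently the linear
coefficient of the thin-limit expansion of the total predator population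
satisfies `(α/(βγ))(d_u w₂'(0) + f(γ/α)) → (2/3)(α/(βγ)) f(γ/α)`. -/
theorem thin_limit_slope
    (du dv α β γ : ℝ) (hdu : 0 < du) (hdv : 0 < dv) (hα : 0 < α) (hβ : 0 < β)
    (hγ : 0 < γ) (hγα : γ < α)
    (f f' : ℝ → ℝ) (θ θ' : ℝ) (hf : Bistable f θ)
    (hf' : ∀ s ∈ Set.Icc (0:ℝ) 1, HasDerivAt f (f' s) s)
    (hf'c : ContinuousOn f' (Set.Icc 0 1)) (hf'1 : f' 1 < 0)
    (hθ'mem : θ' ∈ Set.Ioo θ 1) (hθ'F : (∫ r in (0:ℝ)..θ', f r) = 0)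
    -- `η₀`, `b₀` as in the uniqueness proposition (Proposition 4.2):
    (η₀ b₀ : ℝ) (hη₀ : η₀ ∈ Set.Ioo (0:ℝ) (1 - θ')) (hb₀ : 0 < b₀)
    (W1 W1' W2 W2' W2'' : ℝ → ℝ → ℝ)
    -- `W1 L` is the unique strictly increasing solution of the limit problem:
    (hW1 : ∀ L, b₀ < L →
      IsPL du (γ / α) f L (W1 L) (W1' L) ∧
      (∀ x ∈ Set.Icc (0:ℝ) L, 0 < W1 L x ∧ W1 L x < 1) ∧
      1 - η₀ < W1 L L ∧
      (∀ x ∈ Set.Ico (0:ℝ) L, 0 < W1' L x))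
    (hW1uniq : ∀ L, b₀ < L → ∀ u u' : ℝ → ℝ, IsPL du (γ / α) f L u u' →
      (∀ x ∈ Set.Icc (0:ℝ) L, 0 < u x ∧ u x < 1) → 1 - η₀ < u L →
      Set.EqOn u (W1 L) (Set.Icc 0 L))
    -- `W2 L` is a C² solution of the linear problem:
    (hW2 : ∀ L, b₀ < L →
      (∀ x ∈ Set.Icc (0:ℝ) L, HasDerivWithinAt (W2 L) (W2' L x) (Set.Icc 0 L) x) ∧
      (∀ x ∈ Set.Icc (0:ℝ) L, HasDerivWithinAt (W2' L) (W2'' L x) (Set.Icc 0 L) x) ∧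
      ContinuousOn (W2'' L) (Set.Icc 0 L) ∧
      (∀ x ∈ Set.Icc (0:ℝ) L,
        du * W2'' L x + f' (W1 L x) * W2 L x = 2 / L * f (W1 L x)) ∧
      W2' L L = 0 ∧ W2 L 0 = W1' L 0 / 3) :
    Filter.Tendsto (fun L => du * W2' L 0) Filter.atTop
      (nhds (-(1/3) * f (γ / α))) ∧
    Filter.Tendsto (fun L => α / (β * γ) * (du * W2' L 0 + f (γ / α)))
      Filter.atTop (nhds (2/3 * (α / (β * γ)) * f (γ / α))) :=
  thin_limit_slope_general du α β γ hdu hα hγ hγα f f' θ θ' hf hf' hf'c hf'1 hθ'mem hθ'F η₀ b₀ hη₀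
    W1 W1' W2 W2' W2'' hW1 hW2
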